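/- Let f : I × ℝ² → ℝ satisfy: (H1) for each x,y ∈ ℝ the map t ↦ f(t,x,y) is measurable on I; (H2) for each compact K ⊂ ℝ² there exists ψ_K ∈ L¹(I,[0,∞)) with |f(t,x,y)| ≤ ψ_K(t) for all (x,y) ∈ K; and suppose there exist nonnegative integrable functions L₁,L₂ on I with |f(t,x,y) − f(t,x̄,ȳ)| ≤ L₁(t)|x−x̄| + L₂(t)|y−ȳ| for all t ∈ I and all x,y,x̄,ȳ ∈ ℝ. Then for all u,v ∈ C([−r,T]), the operator G from problem (p) satisfies ‖Gu − Gv‖ ≤ 2·(∫₀ᵀ (T−s)(L₁(s)+L₂(s)) ds)·‖u − v‖, where ‖·‖ denotes the supremum norm on [−r,T]. -/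

import Mathlib

open MeasureTheory Set intervalIntegral Real Filter

noncomputable section

/-- `u` restricted to `[0,T]` belongs to `W^{2,1}`, with (a.e.) second derivative `g`:
`u` is differentiable on `[0,T]` and its derivative `v` is the integral of the
integrable function `g`. -/
def IsW21On (T : ℝ) (u g : ℝ → ℝ) : Prop :=
  IntegrableOn g (Icc (0:ℝ) T) ∧
  ∃ v : ℝ → ℝ,
    (∀ t ∈ Icc (0:ℝ) T, HasDerivWithinAt u (v t) (Icc (0:ℝ) T) t) ∧
    (∀ t ∈ Icc (0:ℝ) T, v t = v 0 + ∫ s in (0:ℝ)..t, g s)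

/-- `u ∈ 𝒳` and `u` is a solution of problem (p). -/
def IsSolutionP (T r B : ℝ) (τ φ : ℝ → ℝ) (f : ℝ → ℝ → ℝ → ℝ) (u : ℝ → ℝ) : Prop :=
  ContinuousOn u (Icc (-r) T) ∧
  (∃ g : ℝ → ℝ, IsW21On T u g ∧
    ∀ᵐ t ∂(volume.restrict (Icc (0:ℝ) T)), -g t = f t (u t) (u (τ t))) ∧
  (∀ t ∈ Icc (-r) (0:ℝ), u t = φ t) ∧ u T = B

/-- Condition (C₁). -/
def CondC1 (T : ℝ) (L1 L2 : ℝ → ℝ) : Prop :=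
  MemLp L1 ⊤ (volume.restrict (Icc (0:ℝ) T)) ∧ MemLp L2 ⊤ (volume.restrict (Icc (0:ℝ) T)) ∧
  eLpNorm (fun t => L1 t + L2 t) ⊤ (volume.restrict (Icc (0:ℝ) T)) < ENNReal.ofReal (1 / T ^ 2)

/-- Condition (C₂). -/
def CondC2 (T : ℝ) (L1 L2 : ℝ → ℝ) : Prop :=
  MemLp L1 2 (volume.restrict (Icc (0:ℝ) T)) ∧ MemLp L2 2 (volume.restrict (Icc (0:ℝ) T)) ∧
  eLpNorm (fun t => L1 t + L2 t) 2 (volume.restrict (Icc (0:ℝ) T)) <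
    ENNReal.ofReal (Real.sqrt (3 / (2 * T ^ 3)))

/-- Condition (C₃). -/
def CondC3 (T : ℝ) (L1 L2 : ℝ → ℝ) : Prop :=
  IntegrableOn L1 (Icc (0:ℝ) T) ∧ IntegrableOn L2 (Icc (0:ℝ) T) ∧
  (∫ t in (0:ℝ)..T, (L1 t + L2 t)) < 1 / (2 * T)

/-- Condition (Ĉ₁). -/
def CondC1hat (T : ℝ) (L1 L2 : ℝ → ℝ) : Prop :=
  MemLp L1 ⊤ (volume.restrict (Icc (0:ℝ) T)) ∧ MemLp L2 ⊤ (volume.restrict (Icc (0:ℝ) T)) ∧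
  eLpNorm (fun t => L1 t + L2 t) ⊤ (volume.restrict (Icc (0:ℝ) T)) < ENNReal.ofReal (2 / T ^ 2)

/-- Condition (Ĉ₂). -/
def CondC2hat (T : ℝ) (L1 L2 : ℝ → ℝ) : Prop :=
  MemLp L1 2 (volume.restrict (Icc (0:ℝ) T)) ∧ MemLp L2 2 (volume.restrict (Icc (0:ℝ) T)) ∧
  eLpNorm (fun t => L1 t + L2 t) 2 (volume.restrict (Icc (0:ℝ) T)) <
    ENNReal.ofReal (Real.sqrt 2 / T)

/-- Condition (Ĉ₃). -/
def CondC3hat (T : ℝ) (L1 L2 : ℝ → ℝ) : Prop :=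
  IntegrableOn L1 (Icc (0:ℝ) T) ∧ IntegrableOn L2 (Icc (0:ℝ) T) ∧
  (∫ t in (0:ℝ)..T, (L1 t + L2 t)) < 1 / T

/-- Lower solution of problem (p). -/
def IsLowerSolutionP (T r B : ℝ) (τ φ : ℝ → ℝ) (f : ℝ → ℝ → ℝ → ℝ) (α : ℝ → ℝ) : Prop :=
  ContinuousOn α (Icc (-r) T) ∧
  AEMeasurable (fun t => f t (α t) (α (τ t))) (volume.restrict (Icc (0:ℝ) T)) ∧
  (∃ g : ℝ → ℝ, IsW21On T α g ∧
    ∀ᵐ t ∂(volume.restrict (Icc (0:ℝ) T)), -g t ≤ f t (α t) (α (τ t))) ∧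
  (∀ t ∈ Icc (-r) (0:ℝ), α t ≤ φ t ∧ φ t - α t ≤ φ 0 - α 0) ∧ α T ≤ B

/-- Upper solution of problem (p). -/
def IsUpperSolutionP (T r B : ℝ) (τ φ : ℝ → ℝ) (f : ℝ → ℝ → ℝ → ℝ) (β : ℝ → ℝ) : Prop :=
  ContinuousOn β (Icc (-r) T) ∧
  AEMeasurable (fun t => f t (β t) (β (τ t))) (volume.restrict (Icc (0:ℝ) T)) ∧
  (∃ g : ℝ → ℝ, IsW21On T β g ∧
    ∀ᵐ t ∂(volume.restrict (Icc (0:ℝ) T)), f t (β t) (β (τ t)) ≤ -g t) ∧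
  (∀ t ∈ Icc (-r) (0:ℝ), φ t ≤ β t ∧ β t - φ t ≤ β 0 - φ 0) ∧ B ≤ β T

/-- The operator `G` associated with problem (p). -/
def Gop (T B : ℝ) (τ φ : ℝ → ℝ) (f : ℝ → ℝ → ℝ → ℝ) (u : ℝ → ℝ) (t : ℝ) : ℝ :=
  if t ≤ 0 then φ t
  else φ 0 + ((B - φ 0 + ∫ s in (0:ℝ)..T, (T - s) * f s (u s) (u (τ s))) / T) * t
    - ∫ s in (0:ℝ)..t, (t - s) * f s (u s) (u (τ s))

/-! For `0 < t`, `G u t - G v t = (t/T) ∫₀ᵀ (T-s) Δ(s) ds - ∫₀ᵗ (t-s) Δ(s) ds` with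
`Δ(s) = f(s,u(s),u(τ s)) - f(s,v(s),v(τ s))`, and the Lipschitz condition gives
`|Δ(s)| ≤ (L₁(s)+L₂(s)) ‖u - v‖`; each of the two terms is then at most
`∫₀ᵀ (T-s)(L₁+L₂) ds · ‖u - v‖`. The real work is the integrability of `s ↦ f(s,u(s),u(τ s))`:
the Lipschitz condition makes `f` a Carathéodory function, so it stays measurable after
substituting measurable functions (approximate them by simple functions), and (H2) applied to the
compact image of `u` gives an integrable majorant. -/

open Topology

section Caratheodory

variable {α X β : Type*} [MeasurableSpace α] {μ : Measure α} [MeasurableSpace β] {F : α → X → β}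

theorem MeasureTheory.SimpleFunc.aemeasurable_apply_of_forall_aemeasurable
    (hF : ∀ x, AEMeasurable (F · x) μ) (g : SimpleFunc α X) :
    AEMeasurable (fun t => F t (g t)) μ := by
  have hmk : ∀ᵐ t ∂μ, ∀ x ∈ g.range, F t x = (hF x).mk _ t :=
    (Filter.eventually_all_finset _).2 fun x _ => (hF x).ae_eq_mk
  refine (g.measurable_bind _ fun x => (hF x).measurable_mk).aemeasurable.congr ?_
  filter_upwards [hmk] with t ht
  exact (ht _ (g.mem_range_self t)).symm

theorem aemeasurable_apply_of_caratheodory [PseudoEMetricSpace X] [MeasurableSpace X]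
    [OpensMeasurableSpace X] [TopologicalSpace.SeparableSpace X]
    [TopologicalSpace β] [TopologicalSpace.PseudoMetrizableSpace β] [BorelSpace β]
    (hF : ∀ x, AEMeasurable (F · x) μ) (hcont : ∀ᵐ t ∂μ, Continuous (F t))
    {w : α → X} (hw : AEMeasurable w μ) :
    AEMeasurable (fun t => F t (w t)) μ := by
  rcases isEmpty_or_nonempty α with _ | ⟨⟨t₀⟩⟩
  · exact (measurable_of_empty _).aemeasurable
  set approx := SimpleFunc.approxOn (hw.mk w) hw.measurable_mk univ (w t₀) (mem_univ _)
  have hlim : ∀ᵐ t ∂μ, Tendsto (fun n => F t (approx n t)) atTop (𝓝 (F t (hw.mk w t))) := by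
    filter_upwards [hcont] with t ht
    exact (ht.tendsto _).comp (SimpleFunc.tendsto_approxOn _ _ (subset_closure (mem_univ _)))
  refine (aemeasurable_of_tendsto_metrizable_ae atTop
    (fun n => (approx n).aemeasurable_apply_of_forall_aemeasurable hF) hlim).congr ?_
  filter_upwards [hw.ae_eq_mk] with t ht
  rw [ht]

end Caratheodory

theorem ContinuousOn.aemeasurable_comp_of_mapsTo {α X Y : Type*} [MeasurableSpace α]
    {μ : Measure α} [TopologicalSpace X] [MeasurableSpace X] [OpensMeasurableSpace X]
    [TopologicalSpace Y] [MeasurableSpace Y] [BorelSpace Y] [Nonempty Y]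
    {w : X → Y} {K : Set X} (hw : ContinuousOn w K) (hK : MeasurableSet K)
    {τ : α → X} (hτ : Measurable τ) {S : Set α} (hS : MeasurableSet S) (hmaps : MapsTo τ S K) :
    AEMeasurable (w ∘ τ) (μ.restrict S) := by
  classical
  have hext : Measurable (K.piecewise w fun _ => Classical.arbitrary Y) :=
    hw.measurable_piecewise continuousOn_const hK
  refine (hext.comp hτ).aemeasurable.congr ?_
  filter_upwards [ae_restrict_mem hS] with t ht
  exact piecewise_eq_of_mem _ _ _ (hmaps ht)

theorem continuous_uncurry_of_abs_sub_le {g : ℝ → ℝ → ℝ} {a b : ℝ} (ha : 0 ≤ a) (hb : 0 ≤ b)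
    (hg : ∀ x y x' y', |g x y - g x' y'| ≤ a * |x - x'| + b * |y - y'|) :
    Continuous fun p : ℝ × ℝ => g p.1 p.2 := by
  refine (LipschitzWith.of_dist_le_mul (K := Real.toNNReal (a + b)) fun p q => ?_).continuous
  rw [Real.coe_toNNReal _ (add_nonneg ha hb), Real.dist_eq, add_mul]
  have h1 : |p.1 - q.1| ≤ dist p q := by
    rw [Prod.dist_eq, ← Real.dist_eq]; exact le_max_left _ _
  have h2 : |p.2 - q.2| ≤ dist p q := by
    rw [Prod.dist_eq, ← Real.dist_eq]; exact le_max_right _ _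
  exact (hg _ _ _ _).trans (add_le_add (mul_le_mul_of_nonneg_left h1 ha)
    (mul_le_mul_of_nonneg_left h2 hb))

theorem integrableOn_caratheodory_deviated {S K : Set ℝ} (hS : MeasurableSet S)
    (hK : IsCompact K) (hSK : S ⊆ K) {τ : ℝ → ℝ} (hτ : Measurable τ) (hmaps : MapsTo τ S K)
    {f : ℝ → ℝ → ℝ → ℝ} (hmeas : ∀ x y, AEMeasurable (fun t => f t x y) (volume.restrict S))
    (hcont : ∀ t ∈ S, Continuous fun p : ℝ × ℝ => f t p.1 p.2)
    (hbound : ∀ C : Set (ℝ × ℝ), IsCompact C → ∃ ψ : ℝ → ℝ,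
      IntegrableOn ψ S ∧ ∀ t ∈ S, ∀ p ∈ C, |f t p.1 p.2| ≤ ψ t)
    {w : ℝ → ℝ} (hw : ContinuousOn w K) :
    IntegrableOn (fun s => f s (w s) (w (τ s))) S := by
  have hpair : AEMeasurable (fun s => (w s, w (τ s))) (volume.restrict S) :=
    ((hw.mono hSK).aemeasurable hS).prodMk
      (hw.aemeasurable_comp_of_mapsTo hK.measurableSet hτ hS hmaps)
  have hF : AEMeasurable (fun s => f s (w s) (w (τ s))) (volume.restrict S) :=
    aemeasurable_apply_of_caratheodory (F := fun t p => f t p.1 p.2)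
      (fun p => hmeas p.1 p.2) ((ae_restrict_iff' hS).2 (.of_forall hcont)) hpair
  have hwK : IsCompact (w '' K) := hK.image_of_continuousOn hw
  obtain ⟨ψ, hψ, hψbound⟩ := hbound _ (hwK.prod hwK)
  refine hψ.mono' hF.aestronglyMeasurable ?_
  filter_upwards [ae_restrict_mem hS] with s hs
  exact hψbound s hs (w s, w (τ s)) ⟨mem_image_of_mem w (hSK hs), mem_image_of_mem w (hmaps hs)⟩

theorem intervalIntegrable_sub_mul {g : ℝ → ℝ} {c T : ℝ} (hg : IntegrableOn g (Icc 0 T))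
    (hc : 0 ≤ c) (hcT : c ≤ T) : IntervalIntegrable (fun s => (c - s) * g s) volume 0 c := by
  rw [intervalIntegrable_iff_integrableOn_Icc_of_le hc]
  exact (hg.mono_set (Icc_subset_Icc le_rfl hcT)).continuousOn_mul (by fun_prop) isCompact_Icc

theorem abs_integral_sub_mul_le {g h : ℝ → ℝ} {t T : ℝ} (ht : 0 ≤ t) (htT : t ≤ T)
    (hg : IntegrableOn g (Icc 0 T)) (hh : IntegrableOn h (Icc 0 T))
    (hgh : ∀ s ∈ Icc 0 T, |g s| ≤ h s) :
    |∫ s in 0..t, (t - s) * g s| ≤ ∫ s in 0..T, (T - s) * h s := by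
  have hT : 0 ≤ T := ht.trans htT
  calc |∫ s in 0..t, (t - s) * g s|
      ≤ ∫ s in 0..t, |(t - s) * g s| := intervalIntegral.abs_integral_le_integral_abs ht
    _ ≤ ∫ s in 0..t, (T - s) * h s := by
        refine intervalIntegral.integral_mono_on ht (intervalIntegrable_sub_mul hg ht htT).abs
          ((intervalIntegrable_sub_mul hh hT le_rfl).mono_set ?_) fun s hs => ?_
        · rw [uIcc_of_le ht, uIcc_of_le hT]; exact Icc_subset_Icc le_rfl htT
        have hgs := hgh s ⟨hs.1, hs.2.trans htT⟩
        rw [abs_mul, abs_of_nonneg (sub_nonneg.2 hs.2)]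
        exact mul_le_mul (by linarith) hgs (abs_nonneg _) (by linarith [hs.2])
    _ ≤ ∫ s in 0..T, (T - s) * h s := by
        refine intervalIntegral.integral_mono_interval le_rfl ht htT ?_
          (intervalIntegrable_sub_mul hh hT le_rfl)
        filter_upwards [ae_restrict_mem measurableSet_Ioc] with s hs
        exact mul_nonneg (sub_nonneg.2 hs.2) ((abs_nonneg _).trans (hgh s (Ioc_subset_Icc_self hs)))

theorem Gop_sub_Gop {T B t : ℝ} {τ φ : ℝ → ℝ} {f : ℝ → ℝ → ℝ → ℝ} {u v : ℝ → ℝ}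
    (ht : 0 < t) (htT : t ≤ T)
    (hu : IntegrableOn (fun s => f s (u s) (u (τ s))) (Icc 0 T))
    (hv : IntegrableOn (fun s => f s (v s) (v (τ s))) (Icc 0 T)) :
    Gop T B τ φ f u t - Gop T B τ φ f v t =
      t / T * (∫ s in 0..T, (T - s) * (f s (u s) (u (τ s)) - f s (v s) (v (τ s)))) -
        ∫ s in 0..t, (t - s) * (f s (u s) (u (τ s)) - f s (v s) (v (τ s))) := by
  have hT : 0 ≤ T := ht.le.trans htT
  simp only [Gop, if_neg ht.not_ge, mul_sub]
  rw [intervalIntegral.integral_sub (intervalIntegrable_sub_mul hu hT le_rfl)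
      (intervalIntegrable_sub_mul hv hT le_rfl),
    intervalIntegral.integral_sub (intervalIntegrable_sub_mul hu ht.le htT)
      (intervalIntegrable_sub_mul hv ht.le htT)]
  ring

theorem Gop_lipschitz_estimate_general
    (T r B : ℝ) (hT : 0 < T) (hr : 0 ≤ r)
    (τ φ : ℝ → ℝ) (hτmeas : Measurable τ) (hτmaps : ∀ t ∈ Icc (0:ℝ) T, τ t ∈ Icc (-r) T)
    (f : ℝ → ℝ → ℝ → ℝ)
    (H1 : ∀ x y : ℝ, AEMeasurable (fun t => f t x y) (volume.restrict (Icc (0:ℝ) T)))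
    (H2 : ∀ K : Set (ℝ × ℝ), IsCompact K → ∃ ψ : ℝ → ℝ,
      IntegrableOn ψ (Icc (0:ℝ) T) ∧ (∀ t ∈ Icc (0:ℝ) T, 0 ≤ ψ t) ∧
      ∀ t ∈ Icc (0:ℝ) T, ∀ p ∈ K, |f t p.1 p.2| ≤ ψ t)
    (L1 L2 : ℝ → ℝ)
    (hL1nn : ∀ t ∈ Icc (0:ℝ) T, 0 ≤ L1 t) (hL2nn : ∀ t ∈ Icc (0:ℝ) T, 0 ≤ L2 t)
    (hL1int : IntegrableOn L1 (Icc (0:ℝ) T)) (hL2int : IntegrableOn L2 (Icc (0:ℝ) T))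
    (H3 : ∀ t ∈ Icc (0:ℝ) T, ∀ x y x' y' : ℝ,
      |f t x y - f t x' y'| ≤ L1 t * |x - x'| + L2 t * |y - y'|)
    (u v : ℝ → ℝ) (hu : ContinuousOn u (Icc (-r) T)) (hv : ContinuousOn v (Icc (-r) T)) :
    ∀ t ∈ Icc (-r) T,
      |Gop T B τ φ f u t - Gop T B τ φ f v t| ≤
        2 * (∫ s in (0:ℝ)..T, (T - s) * (L1 s + L2 s)) *
          sSup ((fun t => |u t - v t|) '' Icc (-r) T) := by
  intro t ht
  have hsub : Icc 0 T ⊆ Icc (-r) T := Icc_subset_Icc (by linarith) le_rfl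
  set M := sSup ((fun t => |u t - v t|) '' Icc (-r) T)
  have hM : ∀ s ∈ Icc (-r) T, |u s - v s| ≤ M := fun s hs =>
    le_csSup (isCompact_Icc.image_of_continuousOn (hu.sub hv).abs).bddAbove ⟨s, hs, rfl⟩
  have hM0 : 0 ≤ M := (abs_nonneg _).trans (hM T ⟨by linarith, le_rfl⟩)
  have hI0 : 0 ≤ ∫ s in (0:ℝ)..T, (T - s) * (L1 s + L2 s) :=
    intervalIntegral.integral_nonneg hT.le fun s hs =>
      mul_nonneg (sub_nonneg.2 hs.2) (add_nonneg (hL1nn s hs) (hL2nn s hs))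
  rcases le_or_gt t 0 with ht0 | ht0
  · simp only [Gop, if_pos ht0, sub_self, abs_zero]
    positivity
  have hF : ∀ w, ContinuousOn w (Icc (-r) T) →
      IntegrableOn (fun s => f s (w s) (w (τ s))) (Icc 0 T) := fun w hw =>
    integrableOn_caratheodory_deviated measurableSet_Icc isCompact_Icc hsub hτmeas hτmaps H1
      (fun t ht => continuous_uncurry_of_abs_sub_le (hL1nn t ht) (hL2nn t ht) (H3 t ht))
      (fun C hC => (H2 C hC).imp fun _ hψ => ⟨hψ.1, hψ.2.2⟩) hw
  have hΔ : ∀ s ∈ Icc 0 T, |f s (u s) (u (τ s)) - f s (v s) (v (τ s))| ≤ M * (L1 s + L2 s) :=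
    fun s hs => (H3 s hs _ _ _ _).trans <| by
      nlinarith [hM s (hsub hs), hM (τ s) (hτmaps s hs), hL1nn s hs, hL2nn s hs]
  have hbound : ∀ c, 0 ≤ c → c ≤ T →
      |∫ s in 0..c, (c - s) * (f s (u s) (u (τ s)) - f s (v s) (v (τ s)))| ≤
        M * ∫ s in (0:ℝ)..T, (T - s) * (L1 s + L2 s) := fun c hc hcT => by
    rw [← intervalIntegral.integral_const_mul]
    simp_rw [mul_left_comm M]
    exact abs_integral_sub_mul_le (h := fun s => M * (L1 s + L2 s)) hc hcT
      ((hF u hu).sub (hF v hv)) ((hL1int.add hL2int).const_mul M) hΔ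
  have hratio : |t / T| ≤ 1 := by
    rw [abs_of_pos (div_pos ht0 hT)]; exact (div_le_one hT).2 ht.2
  rw [Gop_sub_Gop ht0 ht.2 (hF u hu) (hF v hv)]
  calc _ ≤ |t / T| * |∫ s in 0..T, (T - s) * (f s (u s) (u (τ s)) - f s (v s) (v (τ s)))| +
        |∫ s in 0..t, (t - s) * (f s (u s) (u (τ s)) - f s (v s) (v (τ s)))| := by
          rw [← abs_mul]; exact abs_sub _ _
    _ ≤ 1 * (M * ∫ s in (0:ℝ)..T, (T - s) * (L1 s + L2 s)) +
        M * ∫ s in (0:ℝ)..T, (T - s) * (L1 s + L2 s) := by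
          gcongr
          · exact hbound T hT.le le_rfl
          · exact hbound t ht0.le ht.2
    _ = _ := by ring

/-- Contraction-type estimate for the operator `G`: for all `u, v ∈ C([-r,T])`,
`‖Gu − Gv‖ ≤ 2 (∫₀ᵀ (T−s)(L₁(s)+L₂(s)) ds) ‖u − v‖` in the supremum norm on `[-r,T]`. -/
theorem Gop_lipschitz_estimate
    (T r B : ℝ) (hT : 0 < T) (hr : 0 ≤ r)
    (τ φ : ℝ → ℝ) (hτmeas : Measurable τ) (hτmaps : ∀ t ∈ Icc (0:ℝ) T, τ t ∈ Icc (-r) T)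
    (hφ : ContinuousOn φ (Icc (-r) (0:ℝ)))
    (f : ℝ → ℝ → ℝ → ℝ)
    (H1 : ∀ x y : ℝ, AEMeasurable (fun t => f t x y) (volume.restrict (Icc (0:ℝ) T)))
    (H2 : ∀ K : Set (ℝ × ℝ), IsCompact K → ∃ ψ : ℝ → ℝ,
      IntegrableOn ψ (Icc (0:ℝ) T) ∧ (∀ t ∈ Icc (0:ℝ) T, 0 ≤ ψ t) ∧
      ∀ t ∈ Icc (0:ℝ) T, ∀ p ∈ K, |f t p.1 p.2| ≤ ψ t)
    (L1 L2 : ℝ → ℝ)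
    (hL1nn : ∀ t ∈ Icc (0:ℝ) T, 0 ≤ L1 t) (hL2nn : ∀ t ∈ Icc (0:ℝ) T, 0 ≤ L2 t)
    (hL1int : IntegrableOn L1 (Icc (0:ℝ) T)) (hL2int : IntegrableOn L2 (Icc (0:ℝ) T))
    (H3 : ∀ t ∈ Icc (0:ℝ) T, ∀ x y x' y' : ℝ,
      |f t x y - f t x' y'| ≤ L1 t * |x - x'| + L2 t * |y - y'|)
    (u v : ℝ → ℝ) (hu : ContinuousOn u (Icc (-r) T)) (hv : ContinuousOn v (Icc (-r) T)) :
    ∀ t ∈ Icc (-r) T,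
      |Gop T B τ φ f u t - Gop T B τ φ f v t| ≤
        2 * (∫ s in (0:ℝ)..T, (T - s) * (L1 s + L2 s)) *
          sSup ((fun t => |u t - v t|) '' Icc (-r) T) :=
  Gop_lipschitz_estimate_general T r B hT hr τ φ hτmeas hτmaps f H1 H2 L1 L2 hL1nn hL2nn hL1int
    hL2int H3 u v hu hv

end
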